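/- arXiv:2003.14009 — 2 statements merged into one kernel-verified Lean document; each statement's English description precedes it below -/
import Mathlib

section
/- Let W be a metric space, A ⊆ W, and suppose every point of A has, for each ρ > 0, a neighborhood V(ρ) such that any two points of V(ρ) \ A can be joined by a path in W \ A of length at most f(ρ), where f(ρ) → 0 as ρ → 0. If x ∈ A and (x_k) is a sequence in W \ A converging to x, then (x_k) is a Cauchy sequence with respect to the induced length metric on W \ A. -/
open Filter Topology

/-- `x` and `y` are joined by a path avoiding `A` of length (total variation) at most `L`. -/
def JoinedAvoidingWithLength {W : Type*} [MetricSpace W] (A : Set W) (x y : W)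
    (L : ENNReal) : Prop :=
  ∃ γ : ℝ → W, ContinuousOn γ (Set.Icc 0 1) ∧ γ 0 = x ∧ γ 1 = y ∧
    (∀ t ∈ Set.Icc (0:ℝ) 1, γ t ∉ A) ∧ eVariationOn γ (Set.Icc 0 1) ≤ L

/-- If near every point of `A`, points outside `A` can be joined avoiding `A` with
length `f ρ → 0`, then any sequence in `W \ A` converging to a point of `A` is Cauchy
in the induced length metric: eventually any two terms are joined avoiding `A` by
arbitrarily short paths. -/
theorem cauchy_in_length_metric {W : Type*} [MetricSpace W] (A : Set W)
    (f : ℝ → ℝ)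
    (hf : Tendsto f (nhdsWithin 0 (Set.Ioi 0)) (nhds 0))
    (hnbhd : ∀ x ∈ A, ∀ ρ : ℝ, 0 < ρ → ∃ V ∈ nhds x, ∀ y ∈ V \ A, ∀ z ∈ V \ A,
      JoinedAvoidingWithLength A y z (ENNReal.ofReal (f ρ)))
    (x : W) (hx : x ∈ A) (xk : ℕ → W) (hxk : ∀ k, xk k ∉ A)
    (hconv : Tendsto xk atTop (𝓝 x)) :
    ∀ ε : ℝ, 0 < ε → ∃ K : ℕ, ∀ k ≥ K, ∀ l ≥ K,
      JoinedAvoidingWithLength A (xk k) (xk l) (ENNReal.ofReal ε) := by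
  intro ε hε
  -- find ρ > 0 with f ρ ≤ ε
  have h1 : ∀ᶠ ρ in nhdsWithin 0 (Set.Ioi 0), f ρ < ε := by
    have := hf (Iio_mem_nhds (show (0:ℝ) < ε from hε))
    filter_upwards [this] with ρ hρ using hρ
  obtain ⟨ρ, hρε, hρpos⟩ := (h1.and self_mem_nhdsWithin).exists
  obtain ⟨V, hV, hVjoin⟩ := hnbhd x hx ρ hρpos
  obtain ⟨K, hK⟩ := (Filter.tendsto_atTop'.mp hconv) V hV
  refine ⟨K, fun k hk l hl => ?_⟩
  obtain ⟨γ, hc, h0, h1', hA, hlen⟩ :=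
    hVjoin (xk k) ⟨hK k hk, hxk k⟩ (xk l) ⟨hK l hl, hxk l⟩
  exact ⟨γ, hc, h0, h1', hA, hlen.trans (ENNReal.ofReal_le_ofReal hρε.le)⟩
end

section
/- For 0 < ε < 1/2, d ∈ ℕ, k ≥ 1, and 0 < ρ < 1/2, the length of the path γ(s) = (sρ/2 + (1−s)r) for s ∈ [0,1], measured with respect to the weight function g(u) = u^(−ε)(1 − k·log u)^(d/2) on (0, ρ] (i.e., ∫₀¹ g(sρ/2 + (1−s)r)·|ρ/2 − r| ds with 0 < r < ρ), is bounded above by C·ρ^(1−ε)(−log ρ)^d for a constant C depending only on ε, d, k. -/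
/-!
Along the path `γ(s) = s ρ/2 + (1 - s) r` we have `s ρ/2 ≤ γ(s) ≤ ρ`, so the pole contributes at most
`(s ρ/2)^(-ε)` and `1 - k log γ(s) ≤ 2 (1 + k) (-log ρ) (1 - log s)`. The factor `(1 - log s)^d`
is absorbed into `s^(-δ)` with `δ = (1 - ε)/2` via `x^d / d! ≤ exp x`, which leaves the integrable
singularity `s^(-(ε + δ))` on `(0, 1]`.
-/

open MeasureTheory Real Set
open scoped Nat

noncomputable def radialWeight (ε k : ℝ) (d : ℕ) (u : ℝ) : ℝ :=
  u ^ (-ε) * (1 - k * log u) ^ ((d : ℝ) / 2)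

lemma one_le_one_sub_mul_log {k u : ℝ} (hk : 0 ≤ k) (hu : 0 < u) (hu₁ : u ≤ 1) :
    1 ≤ 1 - k * log u := by
  nlinarith [log_nonpos hu.le hu₁]

lemma one_sub_log_pow_le (n : ℕ) {δ s : ℝ} (hδ : 0 < δ) (hs : 0 < s) (hs₁ : s ≤ 1) :
    (1 - log s) ^ n ≤ n ! / δ ^ n * exp δ * s ^ (-δ) := by
  have hx : 0 ≤ δ * (1 - log s) := by nlinarith [log_nonpos hs.le hs₁]
  have hexp : exp (δ * (1 - log s)) = exp δ * s ^ (-δ) := by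
    rw [rpow_def_of_pos hs, ← exp_add]; ring_nf
  have key := pow_div_factorial_le_exp _ hx n
  rw [hexp, div_le_iff₀ (by positivity), mul_pow] at key
  rw [div_mul_eq_mul_div, div_mul_eq_mul_div, le_div_iff₀ (by positivity)]
  linarith

lemma one_sub_mul_log_le {k ρ s u : ℝ} (hk : 0 ≤ k) (hρ : 0 < ρ) (hρ₂ : ρ ≤ 1 / 2)
    (hs : 0 < s) (hs₁ : s ≤ 1) (hu : s * (ρ / 2) ≤ u) :
    1 - k * log u ≤ 2 * (1 + k) * (-log ρ) * (1 - log s) := by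
  have hlog_u : log s + log ρ - log 2 ≤ log u := by
    rw [← log_mul hs.ne' hρ.ne', ← log_div (by positivity) two_ne_zero, mul_div_assoc]
    exact log_le_log (by positivity) hu
  have hlog_ρ : log 2 ≤ -log ρ := by
    rw [← log_inv, ← one_div]
    exact log_le_log (by norm_num) (by rw [le_div_iff₀ hρ]; linarith)
  have hlog_s := log_nonpos hs.le hs₁
  have hlog_two := log_two_gt_d9
  nlinarith [mul_nonneg hk (neg_nonneg.2 hlog_s), mul_nonneg hk (sub_nonneg.2 hlog_ρ)]

lemma radialWeight_nonneg {ε k u : ℝ} (d : ℕ) (hk : 0 ≤ k) (hu : 0 < u) (hu₁ : u ≤ 1) :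
    0 ≤ radialWeight ε k d u :=
  mul_nonneg (rpow_nonneg hu.le _)
    (rpow_nonneg (zero_le_one.trans (one_le_one_sub_mul_log hk hu hu₁)) _)

lemma radialWeight_le {ε k δ ρ s u : ℝ} (d : ℕ) (hε : 0 ≤ ε) (hk : 0 ≤ k) (hδ : 0 < δ)
    (hρ : 0 < ρ) (hρ₂ : ρ ≤ 1 / 2) (hs : 0 < s) (hs₁ : s ≤ 1) (hu : s * (ρ / 2) ≤ u)
    (hu₁ : u ≤ 1) :
    radialWeight ε k d u ≤ 2 ^ ε * (2 * (1 + k)) ^ d * (d ! / δ ^ d * exp δ)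
      * ρ ^ (-ε) * (-log ρ) ^ d * s ^ (-(ε + δ)) := by
  have hu₀ : 0 < u := lt_of_lt_of_le (by positivity) hu
  have hpole : u ^ (-ε) ≤ 2 ^ ε * ρ ^ (-ε) * s ^ (-ε) := by
    calc u ^ (-ε) ≤ (s * (ρ / 2)) ^ (-ε) := rpow_le_rpow_of_nonpos (by positivity) hu (by linarith)
      _ = 2 ^ ε * ρ ^ (-ε) * s ^ (-ε) := by
        rw [mul_rpow hs.le (by positivity), div_rpow hρ.le zero_le_two, rpow_neg zero_le_two]
        field_simp
  have hbase := one_le_one_sub_mul_log hk hu₀ hu₁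
  have hlogρ : 0 ≤ -log ρ := neg_nonneg.2 (log_nonpos hρ.le (by linarith))
  have hlog : (1 - k * log u) ^ ((d : ℝ) / 2) ≤
      (2 * (1 + k)) ^ d * (-log ρ) ^ d * (d ! / δ ^ d * exp δ * s ^ (-δ)) := by
    calc (1 - k * log u) ^ ((d : ℝ) / 2) ≤ (1 - k * log u) ^ d := by
          rw [← rpow_natCast]
          exact rpow_le_rpow_of_exponent_le hbase (by linarith [(d.cast_nonneg : (0 : ℝ) ≤ d)])
      _ ≤ (2 * (1 + k) * (-log ρ) * (1 - log s)) ^ d :=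
          pow_le_pow_left₀ (by linarith) (one_sub_mul_log_le hk hρ hρ₂ hs hs₁ hu) d
      _ ≤ (2 * (1 + k)) ^ d * (-log ρ) ^ d * (d ! / δ ^ d * exp δ * s ^ (-δ)) := by
          rw [mul_pow, mul_pow]
          gcongr
          exact one_sub_log_pow_le d hδ hs hs₁
  calc radialWeight ε k d u
      ≤ (2 ^ ε * ρ ^ (-ε) * s ^ (-ε))
          * ((2 * (1 + k)) ^ d * (-log ρ) ^ d * (d ! / δ ^ d * exp δ * s ^ (-δ))) :=
        mul_le_mul hpole hlog (rpow_nonneg (by linarith) _) (by positivity)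
    _ = _ := by rw [neg_add, rpow_add hs]; ring

lemma setIntegral_Icc_le_of_le_mul_rpow_neg {f : ℝ → ℝ} {M a : ℝ} (ha : a < 1)
    (hf₀ : ∀ s ∈ Ioc (0 : ℝ) 1, 0 ≤ f s) (hf : ∀ s ∈ Ioc (0 : ℝ) 1, f s ≤ M * s ^ (-a)) :
    ∫ s in Icc (0 : ℝ) 1, f s ≤ M / (1 - a) := by
  have ha' : -1 < -a := by linarith
  have hint : IntegrableOn (fun s : ℝ => M * s ^ (-a)) (Ioc 0 1) := by
    have := intervalIntegral.intervalIntegrable_rpow' (a := 0) (b := 1) ha'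
    exact ((intervalIntegrable_iff_integrableOn_Ioc_of_le zero_le_one).1 this).const_mul M
  rw [integral_Icc_eq_integral_Ioc]
  calc ∫ s in Ioc (0 : ℝ) 1, f s ≤ ∫ s in Ioc (0 : ℝ) 1, M * s ^ (-a) :=
        integral_mono_of_nonneg (ae_restrict_of_forall_mem measurableSet_Ioc hf₀) hint
          (ae_restrict_of_forall_mem measurableSet_Ioc hf)
    _ = M / (1 - a) := by
        rw [integral_const_mul, ← intervalIntegral.integral_of_le zero_le_one,
          integral_rpow (Or.inl ha'), one_rpow, zero_rpow (by linarith)]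
        ring_nf

theorem radial_path_length_estimate_general (ε : ℝ) (hε : 0 < ε) (hε' : ε < 1/2)
    (d : ℕ) (k : ℕ) :
    ∃ C : ℝ, 0 < C ∧ ∀ ρ r : ℝ, 0 < ρ → ρ < 1/2 → 0 < r → r < ρ →
      ∫ s in Set.Icc (0:ℝ) 1,
          (s * (ρ/2) + (1 - s) * r) ^ (-ε)
            * (1 - (k:ℝ) * Real.log (s * (ρ/2) + (1 - s) * r)) ^ ((d:ℝ)/2)
            * |ρ/2 - r|
        ≤ C * ρ ^ (1 - ε) * (-Real.log ρ) ^ d := by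
  set δ := (1 - ε) / 2 with hδ_def
  have hδ : 0 < δ := by linarith
  set K := 2 ^ ε * (2 * (1 + (k : ℝ))) ^ d * (d ! / δ ^ d * exp δ)
  refine ⟨K / δ, by positivity, fun ρ r hρ hρ₂ hr hrρ => ?_⟩
  have hM : 0 ≤ K * ρ ^ (-ε) * (-log ρ) ^ d :=
    mul_nonneg (by positivity) (pow_nonneg (neg_nonneg.2 (log_nonpos hρ.le (by linarith))) d)
  have hpath : ∀ s ∈ Ioc (0 : ℝ) 1,
      s * (ρ / 2) ≤ s * (ρ / 2) + (1 - s) * r ∧ s * (ρ / 2) + (1 - s) * r ≤ 1 := by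
    rintro s ⟨hs₀, hs₁⟩
    constructor <;> nlinarith
  have hjump : |ρ / 2 - r| ≤ ρ := abs_le.2 ⟨by linarith, by linarith⟩
  refine (setIntegral_Icc_le_of_le_mul_rpow_neg (a := ε + δ)
    (M := K * ρ ^ (-ε) * (-log ρ) ^ d * ρ)
    (f := fun s => radialWeight ε k d (s * (ρ / 2) + (1 - s) * r) * |ρ / 2 - r|)
    (by linarith) (fun s hs => ?_) (fun s hs => ?_)).trans_eq ?_
  · obtain ⟨hγ₀, hγ₁⟩ := hpath s hs
    exact mul_nonneg (radialWeight_nonneg d k.cast_nonneg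
      (lt_of_lt_of_le (by linarith [mul_pos hs.1 hρ]) hγ₀) hγ₁) (abs_nonneg _)
  · obtain ⟨hγ₀, hγ₁⟩ := hpath s hs
    calc radialWeight ε k d (s * (ρ / 2) + (1 - s) * r) * |ρ / 2 - r|
        ≤ K * ρ ^ (-ε) * (-log ρ) ^ d * s ^ (-(ε + δ)) * ρ :=
          mul_le_mul (radialWeight_le d hε.le k.cast_nonneg hδ hρ hρ₂.le hs.1 hs.2 hγ₀ hγ₁)
            hjump (abs_nonneg _) (mul_nonneg hM (rpow_nonneg hs.1.le _))
      _ = _ := by ring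
  · rw [show 1 - (ε + δ) = δ by ring, sub_eq_neg_add, rpow_add_one hρ.ne']
    ring

/-- The one-dimensional weighted length estimate for the radial path
`γ(s) = s ρ/2 + (1−s) r`. -/
theorem radial_path_length_estimate (ε : ℝ) (hε : 0 < ε) (hε' : ε < 1/2)
    (d : ℕ) (k : ℕ) (hk : 1 ≤ k) :
    ∃ C : ℝ, 0 < C ∧ ∀ ρ r : ℝ, 0 < ρ → ρ < 1/2 → 0 < r → r < ρ →
      ∫ s in Set.Icc (0:ℝ) 1,
          (s * (ρ/2) + (1 - s) * r) ^ (-ε)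
            * (1 - (k:ℝ) * Real.log (s * (ρ/2) + (1 - s) * r)) ^ ((d:ℝ)/2)
            * |ρ/2 - r|
        ≤ C * ρ ^ (1 - ε) * (-Real.log ρ) ^ d :=
  radial_path_length_estimate_general ε hε hε' d k
end
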